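/- (Fold lemma) Let G be a finite simple graph and let v, w be vertices of G with v ≠ w and N(v) ⊆ N(w). Then the inclusion I(G − w) ↪ I(G) is a homotopy equivalence. -/

import Mathlib

open scoped unitInterval

noncomputable section

/-- The infinite square grid graph on `ℤ × ℤ`: two points are adjacent iff the
sum of the absolute differences of the coordinates is `1`. -/
def gridGraph : SimpleGraph (ℤ × ℤ) where
  Adj p q := (p.1 - q.1).natAbs + (p.2 - q.2).natAbs = 1
  symm := by
    constructor
    intro p q h
    try dsimp only at h ⊢
    omega
  loopless := by constructor; intro p h; try dsimp only at h
                 simp at h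

/-- The vertex set of the `(n × k)`-grid graph `Γ_{n,k}`. -/
def gridBox (n k : ℕ) : Set (ℤ × ℤ) :=
  {p | 1 ≤ p.1 ∧ p.1 ≤ (n : ℤ) ∧ 1 ≤ p.2 ∧ p.2 ≤ (k : ℤ)}

/-- Geometric realization of the independence complex of the induced subgraph of `G`
on the vertex set `s`, realized inside `V → ℝ` (with the product topology): the set
of finitely supported convex weightings whose support is an independent subset of `s`. -/
def IndCplx {V : Type} (G : SimpleGraph V) (s : Set V) : Set (V → ℝ) :=
  {f | (∀ v, 0 ≤ f v) ∧ {v | f v ≠ 0}.Finite ∧ {v | f v ≠ 0} ⊆ s ∧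
    (∑ᶠ v, f v) = 1 ∧ ∀ v w, f v ≠ 0 → f w ≠ 0 → ¬ G.Adj v w}

/-- The inclusion of independence complexes induced by an inclusion of vertex sets. -/
def inclMap {V : Type} (G : SimpleGraph V) {s t : Set V} (h : s ⊆ t) :
    C(↥(IndCplx G s), ↥(IndCplx G t)) where
  toFun f := ⟨f.1, by
    obtain ⟨c1, c2, c3, c4, c5⟩ := f.2
    exact ⟨c1, c2, c3.trans h, c4, c5⟩⟩
  continuous_toFun := by
    apply Continuous.subtype_mk
    exact continuous_subtype_val

/-- The `d`-dimensional unit sphere. -/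
def Sph (d : ℕ) : Set (EuclideanSpace ℝ (Fin (d + 1))) := Metric.sphere 0 1

/-- A basepoint on the `d`-sphere. -/
def SphBase (d : ℕ) : ↥(Sph d) :=
  ⟨EuclideanSpace.single (0 : Fin (d + 1)) (1 : ℝ), by
    simp [Sph, EuclideanSpace.norm_single]⟩

/-- Predicate singling out the basepoints in the disjoint union of a family of spheres
together with an extra point. -/
def sphWedgeBasePt {ι : Type} (D : ι → ℕ) : ((Σ i, ↥(Sph (D i))) ⊕ PUnit) → Prop
  | Sum.inl x => x.2 = SphBase (D x.1)
  | Sum.inr _ => True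

/-- The wedge of the family of spheres with dimensions `D i`, `i : ι`;
for an empty family this is a one-point space. -/
abbrev SphereWedge {ι : Type} (D : ι → ℕ) : Type :=
  Quot (fun p q => sphWedgeBasePt D p ∧ sphWedgeBasePt D q)

/-- Relation generating the unreduced suspension: the two cone points are the
two elements of `Bool`. -/
def suspRel (X : Type) : ((X × I) ⊕ Bool) → ((X × I) ⊕ Bool) → Prop
  | Sum.inl p, Sum.inr b => (p.2 = 0 ∧ b = false) ∨ (p.2 = 1 ∧ b = true)
  | _, _ => False

/-- Unreduced suspension (for the empty space this gives two points). -/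
abbrev Susp (X : Type) : Type := Quot (suspRel X)

/-- Wedge sum of two pointed spaces. -/
abbrev Wedge (X Y : Type) (x : X) (y : Y) : Type :=
  Quot (fun p q : X ⊕ Y => p = Sum.inl x ∧ q = Sum.inr y)

/-- The closed neighborhood `N[v]` of a vertex in the grid graph. -/
def closedNbhd (v : ℤ × ℤ) : Set (ℤ × ℤ) := {w | w = v ∨ gridGraph.Adj v w}

/-- The vertex sets of the graphs `A_{n,k}`, induced subgraphs of the grid graph. -/
def Aset (n : ℕ) : ℕ → Set (ℤ × ℤ)
  | 0 => gridBox n 5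
  | k + 1 =>
      Aset n k ∪
      (({(n : ℤ) + 5 * k + 1, (n : ℤ) + 5 * k + 2} : Set ℤ) ×ˢ ({2, 4} : Set ℤ)) ∪
      (({(n : ℤ) + 5 * k + 2, (n : ℤ) + 5 * k + 3, (n : ℤ) + 5 * k + 4,
          (n : ℤ) + 5 * k + 5} : Set ℤ) ×ˢ ({1, 5} : Set ℤ)) ∪
      (({(n : ℤ) + 5 * k + 5} : Set ℤ) ×ˢ ({2, 3, 4} : Set ℤ))


open Classical in
/-- The fold homotopy: at time `t`, move a `t`-fraction of the weight at `w` to `v`. -/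
def Ffun {V : Type} (v w : V) (t : ℝ) (f : V → ℝ) (u : V) : ℝ :=
  f u + (if u = v then t * f w else 0) - (if u = w then t * f w else 0)

/-- Fold lemma: if `v ≠ w` and `N(v) ⊆ N(w)`, then the inclusion `I(G - w) ↪ I(G)`
is a homotopy equivalence. -/
theorem fold_lemma {V : Type} [Fintype V] (G : SimpleGraph V) (v w : V) (hvw : v ≠ w)
    (hN : G.neighborSet v ⊆ G.neighborSet w)
    (hsub : Set.univ \ {w} ⊆ (Set.univ : Set V)) :
    ∃ g : C(↥(IndCplx G (Set.univ : Set V)), ↥(IndCplx G (Set.univ \ {w}))),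
      ((inclMap G hsub).comp g).Homotopic (ContinuousMap.id _) ∧
      (g.comp (inclMap G hsub)).Homotopic (ContinuousMap.id _) := by
  classical
  -- independence of the enlarged support
  have indep : ∀ f : V → ℝ, f ∈ IndCplx G (Set.univ : Set V) → ∀ a b,
      (f a ≠ 0 ∨ (a = v ∧ f w ≠ 0)) → (f b ≠ 0 ∨ (b = v ∧ f w ≠ 0)) → ¬ G.Adj a b := by
    rintro f ⟨-, -, -, -, hind⟩ a b ha hb hadj
    rcases ha with ha | ⟨rfl, hw⟩
    · rcases hb with hb | ⟨rfl, hw⟩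
      · exact hind a b ha hb hadj
      · have h2 : G.Adj w a := hN (G.symm.symm _ _ hadj)
        exact hind w a hw ha h2
    · rcases hb with hb | ⟨rfl, hw2⟩
      · have h2 : G.Adj w b := hN hadj
        exact hind w b hw hb h2
      · exact G.loopless.irrefl _ hadj
  have supp_sub : ∀ (t : ℝ) (f : V → ℝ), (∀ u, 0 ≤ f u) → ∀ u, Ffun v w t f u ≠ 0 →
      (f u ≠ 0 ∨ (u = v ∧ f w ≠ 0)) := by
    intro t f hpos u hu
    by_cases huv : u = v
    · subst huv
      by_cases hfw : f w = 0
      · left; simpa [Ffun, hfw, hvw] using hu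
      · exact Or.inr ⟨rfl, hfw⟩
    · by_cases huw : u = w
      · subst huw
        left
        intro hfw
        exact hu (by simp [Ffun, hfw, huv])
      · left; simpa [Ffun, huv, huw] using hu
  have sum_eq : ∀ (t : ℝ) (f : V → ℝ), (∑ᶠ u, Ffun v w t f u) = ∑ᶠ u, f u := by
    intro t f
    rw [finsum_eq_sum_of_fintype, finsum_eq_sum_of_fintype]
    simp [Ffun, Finset.sum_add_distrib, Finset.sum_sub_distrib, Finset.sum_ite_eq']
  have memF : ∀ t : ℝ, 0 ≤ t → t ≤ 1 → ∀ f : V → ℝ, f ∈ IndCplx G (Set.univ : Set V) →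
      Ffun v w t f ∈ IndCplx G (Set.univ : Set V) := by
    intro t ht0 ht1 f hf
    obtain ⟨hpos, hfin, hs, hsum, hind⟩ := hf
    refine ⟨?_, Set.toFinite _, fun u _ => trivial, by rw [sum_eq]; exact hsum, ?_⟩
    · intro u
      unfold Ffun
      split_ifs with h1 h2 h3
      · nlinarith [hpos u, mul_nonneg ht0 (hpos w)]
      · nlinarith [hpos u, mul_nonneg ht0 (hpos w)]
      · rw [h3]; nlinarith [hpos w]
      · linarith [hpos u]
    · intro a b ha hb
      exact indep f ⟨hpos, hfin, hs, hsum, hind⟩ a b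
        (supp_sub t f hpos a ha) (supp_sub t f hpos b hb)
  -- continuity of the fold map
  have Fcont : Continuous fun p : ℝ × (V → ℝ) => Ffun v w p.1 p.2 := by
    apply continuous_pi
    intro u
    unfold Ffun
    split_ifs <;> fun_prop
  -- the retraction g
  have memG : ∀ f : V → ℝ, f ∈ IndCplx G (Set.univ : Set V) →
      Ffun v w 1 f ∈ IndCplx G (Set.univ \ {w}) := by
    intro f hf
    obtain ⟨hpos, hfin, hs, hsum, hind⟩ := memF 1 zero_le_one le_rfl f hf
    refine ⟨hpos, hfin, ?_, hsum, hind⟩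
    intro u hu
    refine ⟨trivial, ?_⟩
    intro huw
    simp only [Set.mem_singleton_iff] at huw
    subst huw
    apply hu
    simp [Ffun, hvw.symm]
  set g : C(↥(IndCplx G (Set.univ : Set V)), ↥(IndCplx G (Set.univ \ {w}))) :=
    ⟨fun f => ⟨Ffun v w 1 f.1, memG f.1 f.2⟩, by
      apply Continuous.subtype_mk
      exact Fcont.comp ((continuous_const).prodMk continuous_subtype_val)⟩ with hg
  refine ⟨g, ?_, ?_⟩
  · -- homotopy from incl ∘ g to id
    have Hom : (ContinuousMap.id ↥(IndCplx G (Set.univ : Set V))).Homotopy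
        ((inclMap G hsub).comp g) :=
      { toFun := fun p => ⟨Ffun v w (p.1 : ℝ) p.2.1,
          memF (p.1 : ℝ) p.1.2.1 p.1.2.2 p.2.1 p.2.2⟩
        continuous_toFun := by
          apply Continuous.subtype_mk
          exact Fcont.comp
            ((continuous_subtype_val.comp continuous_fst).prodMk
              (continuous_subtype_val.comp continuous_snd))
        map_zero_left := by
          intro x
          apply Subtype.ext
          funext u
          simp [Ffun]
        map_one_left := by
          intro x
          apply Subtype.ext
          rfl }
    exact ⟨Hom.symm⟩
  · have : g.comp (inclMap G hsub) = ContinuousMap.id _ := by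
      ext x u
      have hxw : x.1 w = 0 := by
        by_contra h
        exact (x.2.2.2.1 h).2 rfl
      simp [hg, inclMap, Ffun, hxw]
    rw [this]
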